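/- Let P be the Cantor measure. For all n ≥ 2 and every optimal n-point set α_n ⊆ S_n = {(x,1/n): 0≤x≤1}, the Voronoi region of any element of α_n whose first coordinate lies in [0,1/3] contains no point of [2/3,1], and the Voronoi region of any element whose first coordinate lies in [2/3,1] contains no point of [0,1/3]. -/

import Mathlib

open MeasureTheory Real Set Filter
open scoped ENNReal Topology

noncomputable section

/-- First generating map of the Cantor set. -/
def T1 (x : ℝ) : ℝ := x / 3

/-- Second generating map of the Cantor set. -/
def T2 (x : ℝ) : ℝ := x / 3 + 2 / 3

/-- Map indexed by `Fin 2`. -/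
def Tm : Fin 2 → ℝ → ℝ := ![T1, T2]

/-- Composition `T_σ = T_{σ₁} ∘ ⋯ ∘ T_{σ_k}` for a word over `{1,2}` (as a list over `Fin 2`). -/
def Tw (l : List (Fin 2)) : ℝ → ℝ := l.foldr (fun i g => Tm i ∘ g) id

/-- Squared Euclidean distance between `x ∈ ℝ` (identified with `(x,0)`) and `(a,b) ∈ ℝ²`. -/
def rho (x : ℝ) (p : ℝ × ℝ) : ℝ := (x - p.1) ^ 2 + p.2 ^ 2

/-- Distortion error of a set `α ⊆ ℝ²` for `P`. -/
def distortion (P : Measure ℝ) (α : Set (ℝ × ℝ)) : ℝ := ∫ x, ⨅ a : α, rho x (a : ℝ × ℝ) ∂P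

/-- The constraint `S_j = {(x, 1/j) : 0 ≤ x ≤ 1}`. -/
def Sj (j : ℕ) : Set (ℝ × ℝ) := {p | p.1 ∈ Icc (0 : ℝ) 1 ∧ p.2 = 1 / (j : ℝ)}

/-- The `n`th constrained quantization error for `P` with respect to the family `Sj`. -/
def Vc (P : Measure ℝ) (n : ℕ) : ℝ :=
  sInf {e : ℝ | ∃ α : Finset (ℝ × ℝ), α.Nonempty ∧ α.card ≤ n ∧
    (↑α : Set (ℝ × ℝ)) ⊆ ⋃ j ∈ Finset.Icc 1 n, Sj j ∧ e = distortion P (↑α : Set (ℝ × ℝ))}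

/-!
Suppose a point `p` of `α` with `p.1 ≤ 1/3` is nearest to some `x ≥ 2/3`. A point of `α` with
first coordinate in `(1/3, 1)` would be strictly closer to `x`, so every `y ∈ J₂` is at squared
horizontal distance at least `(1 - y)²` from `α`. All points of `α` are at height `1/n`, hence the
distortion of `α` is at least `1/n² + ∫_{J₂} (1 - y)² dP = 1/n² + 1/48`, while the two points
`(1/6, 1/n)`, `(5/6, 1/n)` already achieve `1/n² + 1/72`. The other case is the mirror image.

The integrals come from the self-similarity of `P`: once `P` is known to live on `[0, 1]`, the
equation `∫ f dP = ∫ (f ∘ T1 + f ∘ T2) / 2 dP` gives mean `1/2` and variance `1/8`, and reduces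
integrals over `J₁`, `J₂` to integrals of quadratics over all of `P`.
-/

local notation "J₁" => Icc (0 : ℝ) (1 / 3)
local notation "J₂" => Icc (2 / 3 : ℝ) 1

def IsCantorMeasure (P : Measure ℝ) : Prop :=
  P = (1 / 2 : ℝ≥0∞) • P.map T1 + (1 / 2 : ℝ≥0∞) • P.map T2

def voronoiRegion (α : Finset (ℝ × ℝ)) (p : ℝ × ℝ) : Set ℝ :=
  {x | ∀ b ∈ α, rho x p ≤ rho x b}

lemma continuous_T1 : Continuous T1 := by unfold T1; fun_prop

lemma continuous_T2 : Continuous T2 := by unfold T2; fun_prop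

def distUnitInterval (x : ℝ) : ℝ := max 0 (max (-x) (x - 1))

lemma continuous_distUnitInterval : Continuous distUnitInterval := by
  unfold distUnitInterval; fun_prop

lemma distUnitInterval_nonneg (x : ℝ) : 0 ≤ distUnitInterval x := le_max_left _ _

lemma distUnitInterval_pos {x : ℝ} (hx : x ∉ Icc (0 : ℝ) 1) : 0 < distUnitInterval x := by
  rw [mem_Icc, not_and_or, not_le, not_le] at hx
  unfold distUnitInterval
  rcases hx with hx | hx
  · exact lt_max_of_lt_right (lt_max_of_lt_left (by linarith))
  · exact lt_max_of_lt_right (lt_max_of_lt_right (by linarith))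

lemma distUnitInterval_T1_le (x : ℝ) : distUnitInterval (T1 x) ≤ distUnitInterval x / 3 := by
  unfold distUnitInterval T1
  refine max_le (by positivity) (max_le ?_ ?_)
  · linarith [le_max_left (-x) (x - 1), le_max_right 0 (max (-x) (x - 1))]
  · linarith [le_max_right (-x) (x - 1), le_max_right 0 (max (-x) (x - 1))]

lemma distUnitInterval_T2_le (x : ℝ) : distUnitInterval (T2 x) ≤ distUnitInterval x / 3 := by
  unfold distUnitInterval T2
  refine max_le (by positivity) (max_le ?_ ?_)
  · linarith [le_max_left (-x) (x - 1), le_max_right 0 (max (-x) (x - 1))]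
  · linarith [le_max_right (-x) (x - 1), le_max_right 0 (max (-x) (x - 1))]

namespace IsCantorMeasure

variable {P : Measure ℝ}

lemma integrable_map_T1_and_T2 (hP : IsCantorMeasure P) {f : ℝ → ℝ} (hf : Integrable f P) :
    Integrable f (P.map T1) ∧ Integrable f (P.map T2) := by
  rwa [hP, integrable_add_measure, integrable_smul_measure (by norm_num) (by norm_num),
    integrable_smul_measure (by norm_num) (by norm_num)] at hf

lemma integral_eq (hP : IsCantorMeasure P) {f : ℝ → ℝ} (hf : Integrable f P) :
    ∫ x, f x ∂P = ∫ x, (f (T1 x) + f (T2 x)) / 2 ∂P := by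
  obtain ⟨hf₁, hf₂⟩ := hP.integrable_map_T1_and_T2 hf
  have hf₁' : Integrable (fun x => f (T1 x)) P := hf₁.comp_measurable continuous_T1.measurable
  have hf₂' : Integrable (fun x => f (T2 x)) P := hf₂.comp_measurable continuous_T2.measurable
  rw [integral_div, integral_add hf₁' hf₂']
  conv_lhs => rw [hP]
  rw [integral_add_measure (hf₁.smul_measure (by norm_num)) (hf₂.smul_measure (by norm_num)),
    integral_smul_measure, integral_smul_measure,
    integral_map continuous_T1.aemeasurable hf₁.aestronglyMeasurable,
    integral_map continuous_T2.aemeasurable hf₂.aestronglyMeasurable]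
  norm_num
  ring

lemma ae_mem_Icc [IsFiniteMeasure P] (hP : IsCantorMeasure P) : ∀ᵐ x ∂P, x ∈ Icc (0 : ℝ) 1 := by
  -- The bounded, strictly increasing `arctan ∘ distUnitInterval` strictly decreases under `T1` and
  -- `T2` off `[0, 1]`, while self-similarity says that on average it does not decrease at all.
  set ψ : ℝ → ℝ := fun x => arctan (distUnitInterval x)
  have hint : ∀ {g : ℝ → ℝ}, Continuous g → Integrable (fun x => ψ (g x)) P :=
    fun hg => Integrable.of_bound
      (continuous_arctan.comp (continuous_distUnitInterval.comp hg)).aestronglyMeasurable (π / 2)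
      (ae_of_all _ fun x => abs_le.2 ⟨(neg_pi_div_two_lt_arctan _).le, (arctan_lt_pi_div_two _).le⟩)
  have hint₀ : Integrable ψ P := hint continuous_id
  have hint₁₂ : Integrable (fun x => (ψ (T1 x) + ψ (T2 x)) / 2) P :=
    ((hint continuous_T1).add (hint continuous_T2)).div_const 2
  have hle : ∀ x, (ψ (T1 x) + ψ (T2 x)) / 2 ≤ ψ x := fun x => by
    have h₁ := distUnitInterval_T1_le x
    have h₂ := distUnitInterval_T2_le x
    have h₀ := distUnitInterval_nonneg x
    have := arctan_mono (show distUnitInterval (T1 x) ≤ distUnitInterval x by linarith)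
    have := arctan_mono (show distUnitInterval (T2 x) ≤ distUnitInterval x by linarith)
    linarith
  have hzero : ∫ x, ψ x - (ψ (T1 x) + ψ (T2 x)) / 2 ∂P = 0 := by
    rw [integral_sub hint₀ hint₁₂, ← hP.integral_eq hint₀, sub_self]
  filter_upwards [(integral_eq_zero_iff_of_nonneg (fun x => sub_nonneg.2 (hle x))
    (hint₀.sub hint₁₂)).1 hzero] with x hx
  by_contra hx01
  have h₁ := distUnitInterval_T1_le x
  have h₂ := distUnitInterval_T2_le x
  have h₀ := distUnitInterval_pos hx01
  have := arctan_strictMono (show distUnitInterval (T1 x) < distUnitInterval x by linarith)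
  have := arctan_strictMono (show distUnitInterval (T2 x) < distUnitInterval x by linarith)
  simp only [Pi.zero_apply] at hx
  linarith

lemma integrable_of_continuous [IsFiniteMeasure P] (hP : IsCantorMeasure P) {f : ℝ → ℝ}
    (hf : Continuous f) : Integrable f P := by
  rw [← Measure.restrict_eq_self_of_ae_mem hP.ae_mem_Icc]
  exact hf.continuousOn.integrableOn_compact isCompact_Icc

lemma integral_eq_of_average_eq [IsFiniteMeasure P] (hP : IsCantorMeasure P) {f g : ℝ → ℝ}
    (hf : Integrable f P) (hfg : ∀ x ∈ Icc (0 : ℝ) 1, (f (T1 x) + f (T2 x)) / 2 = g x) :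
    ∫ x, f x ∂P = ∫ x, g x ∂P :=
  (hP.integral_eq hf).trans (integral_congr_ae (hP.ae_mem_Icc.mono hfg))

variable [IsProbabilityMeasure P]

lemma integral_sub_half (hP : IsCantorMeasure P) : ∫ x, (x - 1 / 2) ∂P = 0 := by
  have h := hP.integral_eq_of_average_eq (f := fun x => x - 1 / 2)
    (hP.integrable_of_continuous (by fun_prop)) (g := fun x => (x - 1 / 2) / 3)
    fun x _ => by simp only [T1, T2]; ring
  rw [integral_div] at h
  linarith

lemma integral_sq_sub_half (hP : IsCantorMeasure P) : ∫ x, (x - 1 / 2) ^ 2 ∂P = 1 / 8 := by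
  have hsq : Integrable (fun x => (x - 1 / 2) ^ 2) P := hP.integrable_of_continuous (by fun_prop)
  have h := hP.integral_eq_of_average_eq hsq (g := fun x => (x - 1 / 2) ^ 2 / 9 + 1 / 9)
    fun x _ => by simp only [T1, T2]; ring
  rw [integral_add (hsq.div_const 9) (integrable_const _), integral_div, integral_const,
    probReal_univ, one_smul] at h
  linarith

lemma integral_sq_sub (hP : IsCantorMeasure P) (c : ℝ) :
    ∫ x, (x - c) ^ 2 ∂P = (c - 1 / 2) ^ 2 + 1 / 8 := by
  have hsq : Integrable (fun x => (x - 1 / 2) ^ 2) P := hP.integrable_of_continuous (by fun_prop)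
  have hlin : Integrable (fun x => 2 * (1 / 2 - c) * (x - 1 / 2)) P :=
    hP.integrable_of_continuous (by fun_prop)
  have hsum : Integrable (fun x => (x - 1 / 2) ^ 2 + 2 * (1 / 2 - c) * (x - 1 / 2)) P :=
    hsq.add hlin
  calc ∫ x, (x - c) ^ 2 ∂P
      = ∫ x, ((x - 1 / 2) ^ 2 + 2 * (1 / 2 - c) * (x - 1 / 2) + (1 / 2 - c) ^ 2) ∂P := by
        congr 1; ext x; ring
    _ = (c - 1 / 2) ^ 2 + 1 / 8 := by
        rw [integral_add hsum (integrable_const _), integral_add hsq hlin, integral_const_mul,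
          hP.integral_sq_sub_half, hP.integral_sub_half, integral_const, probReal_univ, one_smul]
        ring

lemma integral_indicator_J₁ (hP : IsCantorMeasure P) :
    ∫ x, indicator J₁ (fun y => y ^ 2) x ∂P = 1 / 48 := by
  rw [hP.integral_eq_of_average_eq ((hP.integrable_of_continuous (by fun_prop)).indicator
    measurableSet_Icc) (g := fun x => (x - 0) ^ 2 / 18), integral_div, hP.integral_sq_sub]
  · norm_num
  intro x ⟨hx₀, hx₁⟩
  rw [indicator_of_mem, indicator_of_notMem]
  · simp only [T1]; ring
  all_goals simp only [T1, T2, mem_Icc]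
  · intro h; linarith [h.2]
  · constructor <;> linarith

lemma integral_indicator_J₂ (hP : IsCantorMeasure P) :
    ∫ x, indicator J₂ (fun y => (1 - y) ^ 2) x ∂P = 1 / 48 := by
  rw [hP.integral_eq_of_average_eq ((hP.integrable_of_continuous (by fun_prop)).indicator
    measurableSet_Icc) (g := fun x => (x - 1) ^ 2 / 18), integral_div, hP.integral_sq_sub]
  · norm_num
  intro x ⟨hx₀, hx₁⟩
  rw [indicator_of_notMem, indicator_of_mem]
  · simp only [T2]; ring
  all_goals simp only [T1, T2, mem_Icc]
  · constructor <;> linarith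
  · intro h; linarith [h.1]

lemma integral_min_sq (hP : IsCantorMeasure P) :
    ∫ x, min ((x - 1 / 6) ^ 2) ((x - 5 / 6) ^ 2) ∂P = 1 / 72 := by
  rw [hP.integral_eq_of_average_eq (hP.integrable_of_continuous (by fun_prop))
    (g := fun x => (x - 1 / 2) ^ 2 / 9), integral_div, hP.integral_sq_sub]
  · norm_num
  intro x ⟨hx₀, hx₁⟩
  simp only [T1, T2]
  rw [min_eq_left (by nlinarith), min_eq_right (by nlinarith)]
  ring

end IsCantorMeasure

section Distortion

variable {μ : Measure ℝ} {α : Set (ℝ × ℝ)}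

lemma rho_nonneg (x : ℝ) (a : ℝ × ℝ) : 0 ≤ rho x a := add_nonneg (sq_nonneg _) (sq_nonneg _)

lemma ciInf_rho_le {a : ℝ × ℝ} (ha : a ∈ α) (x : ℝ) : ⨅ b : α, rho x b ≤ rho x a :=
  ciInf_le ⟨0, by rintro _ ⟨b, rfl⟩; exact rho_nonneg x b⟩ (⟨a, ha⟩ : α)

lemma distortion_nonneg : 0 ≤ distortion μ α :=
  integral_nonneg fun x => Real.iInf_nonneg fun a => rho_nonneg x a

lemma distortion_le_integral {g : ℝ → ℝ} (hg : Integrable g μ)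
    (h : ∀ x, ∃ a ∈ α, rho x a ≤ g x) : distortion μ α ≤ ∫ x, g x ∂μ :=
  integral_mono_of_nonneg (ae_of_all _ fun x => Real.iInf_nonneg fun a => rho_nonneg x a) hg
    (ae_of_all _ fun x => by
      obtain ⟨a, ha, hle⟩ := h x
      exact (ciInf_rho_le ha x).trans hle)

lemma integral_le_distortion (hα : α.Countable) {a₀ : ℝ × ℝ} (ha₀ : a₀ ∈ α)
    (hρ : Integrable (fun x => rho x a₀) μ) {g : ℝ → ℝ} (hg : Integrable g μ)
    (h : ∀ x, ∀ a ∈ α, g x ≤ rho x a) : ∫ x, g x ∂μ ≤ distortion μ α := by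
  have : Countable α := hα.to_subtype
  have : Nonempty α := ⟨⟨a₀, ha₀⟩⟩
  have hmeas : Measurable fun x => ⨅ a : α, rho x a :=
    Measurable.iInf fun a => by unfold rho; fun_prop
  refine integral_mono hg (hρ.mono' hmeas.aestronglyMeasurable (ae_of_all _ fun x => ?_))
    fun x => le_ciInf fun a => h x a a.2
  rw [Real.norm_of_nonneg (Real.iInf_nonneg fun a : α => rho_nonneg x a)]
  exact ciInf_rho_le ha₀ x

lemma Vc_le_distortion {n : ℕ} {β : Finset (ℝ × ℝ)} (hne : β.Nonempty) (hcard : β.card ≤ n)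
    (hsub : (↑β : Set (ℝ × ℝ)) ⊆ ⋃ j ∈ Finset.Icc 1 n, Sj j) : Vc μ n ≤ distortion μ ↑β :=
  csInf_le ⟨0, by rintro _ ⟨γ, -, -, -, rfl⟩; exact distortion_nonneg⟩ ⟨β, hne, hcard, hsub, rfl⟩

end Distortion

lemma sq_sub_le_of_mem_voronoiRegion {n : ℕ} {α : Finset (ℝ × ℝ)}
    (hsub : (↑α : Set (ℝ × ℝ)) ⊆ Sj n) {p a : ℝ × ℝ} (hp : p ∈ α) (ha : a ∈ α) {x : ℝ}
    (hx : x ∈ voronoiRegion α p) :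
    (x - p.1) ^ 2 ≤ (x - a.1) ^ 2 := by
  have h := hx a ha
  unfold rho at h
  rw [(hsub hp).2, (hsub ha).2] at h
  linarith

lemma one_sub_sq_le_of_nearest {p x a y : ℝ} (hp : p ≤ 1 / 3) (hx : 2 / 3 ≤ x)
    (hnear : (x - p) ^ 2 ≤ (x - a) ^ 2) (hy : y ∈ J₂) : (1 - y) ^ 2 ≤ (y - a) ^ 2 := by
  obtain ⟨hy₀, hy₁⟩ := hy
  rcases le_or_gt a (1 / 3) with ha | ha
  · nlinarith
  · -- `a` can be no closer to `x` than `p` only if `a ≥ 2x - p ≥ 1`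
    have h1a : 1 ≤ a := by nlinarith
    nlinarith

lemma sq_le_of_nearest {p x a y : ℝ} (hp : 2 / 3 ≤ p) (hx : x ≤ 1 / 3)
    (hnear : (x - p) ^ 2 ≤ (x - a) ^ 2) (hy : y ∈ J₁) : y ^ 2 ≤ (y - a) ^ 2 := by
  have h := one_sub_sq_le_of_nearest (p := 1 - p) (x := 1 - x) (a := 1 - a) (y := 1 - y)
    (by linarith) (by linarith) (by linarith [hnear]) ⟨by linarith [hy.2], by linarith [hy.1]⟩
  linarith

namespace IsCantorMeasure

variable {P : Measure ℝ} [IsProbabilityMeasure P]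

lemma Vc_le (hP : IsCantorMeasure P) {n : ℕ} (hn : 2 ≤ n) :
    Vc P n ≤ 1 / 72 + (1 / (n : ℝ)) ^ 2 := by
  set q₁ : ℝ × ℝ := (1 / 6, 1 / n)
  set q₂ : ℝ × ℝ := (5 / 6, 1 / n)
  have hsub : (↑({q₁, q₂} : Finset (ℝ × ℝ)) : Set (ℝ × ℝ)) ⊆ ⋃ j ∈ Finset.Icc 1 n, Sj j := by
    refine Subset.trans ?_ (subset_biUnion_of_mem (u := Sj) (Finset.mem_coe.2
      (Finset.mem_Icc.2 ⟨by omega, le_rfl⟩)))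
    simp only [Finset.coe_insert, Finset.coe_singleton, insert_subset_iff, singleton_subset_iff]
    exact ⟨⟨by norm_num, rfl⟩, ⟨by norm_num, rfl⟩⟩
  calc Vc P n ≤ distortion P ↑({q₁, q₂} : Finset (ℝ × ℝ)) :=
        Vc_le_distortion (Finset.insert_nonempty _ _) (Finset.card_le_two.trans hn) hsub
    _ ≤ ∫ x, (min ((x - 1 / 6) ^ 2) ((x - 5 / 6) ^ 2) + (1 / (n : ℝ)) ^ 2) ∂P := by
        refine distortion_le_integral ((hP.integrable_of_continuous (by fun_prop)).add
          (integrable_const _)) fun x => ?_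
        rcases min_choice ((x - 1 / 6) ^ 2) ((x - 5 / 6) ^ 2) with h | h
        · exact ⟨q₁, by simp, by rw [h]; rfl⟩
        · exact ⟨q₂, by simp, by rw [h]; rfl⟩
    _ = 1 / 72 + (1 / (n : ℝ)) ^ 2 := by
        rw [integral_add (hP.integrable_of_continuous (by fun_prop)) (integrable_const _),
          hP.integral_min_sq, integral_const, probReal_univ, one_smul]

lemma integral_indicator_add_le_distortion (hP : IsCantorMeasure P) {n : ℕ}
    {α : Finset (ℝ × ℝ)} (hne : α.Nonempty) (hsub : (↑α : Set (ℝ × ℝ)) ⊆ Sj n) {s : Set ℝ}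
    (hs : MeasurableSet s) {f : ℝ → ℝ} (hf : Continuous f)
    (hfα : ∀ a ∈ α, ∀ y ∈ s, f y ≤ (y - a.1) ^ 2) :
    ∫ x, s.indicator f x ∂P + (1 / (n : ℝ)) ^ 2 ≤ distortion P ↑α := by
  obtain ⟨a₀, ha₀⟩ := hne
  have hind : Integrable (s.indicator f) P := (hP.integrable_of_continuous hf).indicator hs
  calc ∫ x, s.indicator f x ∂P + (1 / (n : ℝ)) ^ 2
      = ∫ x, (s.indicator f x + (1 / (n : ℝ)) ^ 2) ∂P := by
        rw [integral_add hind (integrable_const _), integral_const, probReal_univ, one_smul]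
    _ ≤ distortion P ↑α := integral_le_distortion α.countable_toSet ha₀
        (hP.integrable_of_continuous (by unfold rho; fun_prop)) (hind.add (integrable_const _))
        fun y a ha => ?_
  rw [rho, (hsub ha).2]
  by_cases hy : y ∈ s
  · simpa [indicator_of_mem hy] using hfα a ha y hy
  · simp [indicator_of_notMem hy, sq_nonneg]

end IsCantorMeasure

theorem voronoi_separation_general (P : Measure ℝ) [IsProbabilityMeasure P]
    (hP : P = (1 / 2 : ℝ≥0∞) • P.map T1 + (1 / 2 : ℝ≥0∞) • P.map T2)
    (n : ℕ) (hn : 2 ≤ n) (α : Finset (ℝ × ℝ))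
    (hsubS : (↑α : Set (ℝ × ℝ)) ⊆ Sj n)
    (hopt : distortion P (↑α : Set (ℝ × ℝ)) = Vc P n) :
    (∀ p ∈ α, p.1 ∈ Icc (0 : ℝ) (1 / 3) →
      ∀ x ∈ Icc (2 / 3 : ℝ) 1, ¬∀ b ∈ α, rho x p ≤ rho x b) ∧
    (∀ p ∈ α, p.1 ∈ Icc (2 / 3 : ℝ) 1 →
      ∀ x ∈ Icc (0 : ℝ) (1 / 3), ¬∀ b ∈ α, rho x p ≤ rho x b) := by
  have hCantor : IsCantorMeasure P := hP
  have hVc := hCantor.Vc_le hn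
  refine ⟨fun p hp hp1 x hx hxp => ?_, fun p hp hp1 x hx hxp => ?_⟩
  · have h := hCantor.integral_indicator_add_le_distortion ⟨p, hp⟩ hsubS measurableSet_Icc
      (f := fun y => (1 - y) ^ 2) (by fun_prop) fun a ha y hy =>
        one_sub_sq_le_of_nearest hp1.2 hx.1 (sq_sub_le_of_mem_voronoiRegion hsubS hp ha hxp) hy
    rw [hCantor.integral_indicator_J₂] at h
    linarith
  · have h := hCantor.integral_indicator_add_le_distortion ⟨p, hp⟩ hsubS measurableSet_Icc
      (f := fun y => y ^ 2) (by fun_prop) fun a ha y hy =>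
        sq_le_of_nearest hp1.1 hx.2 (sq_sub_le_of_mem_voronoiRegion hsubS hp ha hxp) hy
    rw [hCantor.integral_indicator_J₁] at h
    linarith

theorem voronoi_separation (P : Measure ℝ) [IsProbabilityMeasure P]
    (hP : P = (1 / 2 : ℝ≥0∞) • P.map T1 + (1 / 2 : ℝ≥0∞) • P.map T2)
    (n : ℕ) (hn : 2 ≤ n) (α : Finset (ℝ × ℝ)) (hne : α.Nonempty) (hcard : α.card ≤ n)
    (hsubS : (↑α : Set (ℝ × ℝ)) ⊆ Sj n)
    (hopt : distortion P (↑α : Set (ℝ × ℝ)) = Vc P n) :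
    (∀ p ∈ α, p.1 ∈ Icc (0 : ℝ) (1 / 3) →
      ∀ x ∈ Icc (2 / 3 : ℝ) 1, ¬∀ b ∈ α, rho x p ≤ rho x b) ∧
    (∀ p ∈ α, p.1 ∈ Icc (2 / 3 : ℝ) 1 →
      ∀ x ∈ Icc (0 : ℝ) (1 / 3), ¬∀ b ∈ α, rho x p ≤ rho x b) :=
  voronoi_separation_general P hP n hn α hsubS hopt
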